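/- arXiv:1201.6216 — 5 statements merged into one kernel-verified Lean document; each statement's English description precedes it below -/
import Mathlib

section
/- For every real number x ≠ 0 and every real number y, one has |x − y| − |x| = −y·(𝟙{x > 0} − 𝟙{x < 0}) + 2∫₀^y (𝟙{x ≤ s} − 𝟙{x ≤ 0}) ds, where ∫₀^y denotes the signed (interval) integral, equal to −∫_y^0 when y < 0. -/
open MeasureTheory intervalIntegral

private lemma f_mono (x : ℝ) :
    Monotone (fun s : ℝ => (if x ≤ s then (1 : ℝ) else 0) - (if x ≤ 0 then (1 : ℝ) else 0)) := by
  intro a b hab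
  dsimp only
  have h : (if x ≤ a then (1:ℝ) else 0) ≤ (if x ≤ b then (1:ℝ) else 0) := by
    by_cases h : x ≤ a
    · simp [h, h.trans hab]
    · simp only [if_neg h]
      split <;> norm_num
  linarith

private lemma f_integrable (x a b : ℝ) :
    IntervalIntegrable
      (fun s : ℝ => (if x ≤ s then (1 : ℝ) else 0) - (if x ≤ 0 then (1 : ℝ) else 0))
      volume a b :=
  (f_mono x).intervalIntegrable

private lemma ae_ne (x : ℝ) : ∀ᵐ s : ℝ, s ≠ x := by
  rw [MeasureTheory.ae_iff]
  simp

/-- Identity (2.6): for `x ≠ 0` and any `y`,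
`|x - y| - |x| = -y·(𝟙{x>0} - 𝟙{x<0}) + 2∫₀^y (𝟙{x ≤ s} - 𝟙{x ≤ 0}) ds`. -/
theorem abs_sub_identity (x y : ℝ) (hx : x ≠ 0) :
    |x - y| - |x| =
      -y * ((if x > 0 then (1 : ℝ) else 0) - (if x < 0 then (1 : ℝ) else 0)) +
        2 * ∫ s in (0 : ℝ)..y,
          ((if x ≤ s then (1 : ℝ) else 0) - (if x ≤ 0 then (1 : ℝ) else 0)) := by
  rcases hx.lt_or_gt with hneg | hpos
  · -- x < 0
    simp only [if_neg (not_lt.mpr hneg.le), if_pos hneg, if_pos hneg.le]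
    rcases le_or_gt x y with hxy | hyx
    · -- y ≥ x : integrand is 0 a.e. on the interval
      have hI : (∫ s in (0:ℝ)..y, ((if x ≤ s then (1:ℝ) else 0) - 1)) = 0 := by
        apply integral_zero_ae
        filter_upwards with s hs
        have : x < s := lt_of_le_of_lt (le_min hneg.le hxy) hs.1
        simp [this.le]
      rw [hI]
      rw [abs_of_nonpos (by linarith), abs_of_nonpos hneg.le]
      ring
    · -- y < x < 0 : split at x
      have hsplit := integral_add_adjacent_intervals (a := (0:ℝ)) (b := x) (c := y)
        (f_integrable x 0 x) (f_integrable x x y)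
      have h1 : (∫ s in (0:ℝ)..x, ((if x ≤ s then (1:ℝ) else 0) - (if x ≤ 0 then (1:ℝ) else 0))) = 0 := by
        apply integral_zero_ae
        filter_upwards with s hs
        have : x < s := by
          have h' := hs.1
          rwa [min_eq_right hneg.le] at h'
        simp [this.le, hneg.le]
      have h2 : (∫ s in x..y, ((if x ≤ s then (1:ℝ) else 0) - (if x ≤ 0 then (1:ℝ) else 0))) = x - y := by
        have : (∫ s in x..y, ((if x ≤ s then (1:ℝ) else 0) - (if x ≤ 0 then (1:ℝ) else 0)))
            = ∫ _ in x..y, (-1 : ℝ) := by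
          apply intervalIntegral.integral_congr_ae
          filter_upwards [ae_ne x] with s hsne hs
          have : s < x := by
            rcases hs with ⟨_, h'⟩
            have hle : s ≤ x := by simpa [max_eq_left hyx.le] using h'
            exact lt_of_le_of_ne hle hsne
          simp [not_le.mpr this, hneg.le]
        rw [this, intervalIntegral.integral_const]
        simp
      have hI : (∫ s in (0:ℝ)..y, ((if x ≤ s then (1:ℝ) else 0) - (if x ≤ 0 then (1:ℝ) else 0))) = x - y := by
        rw [← hsplit, h1, h2]; ring
      simp only [if_pos hneg.le] at hI
      rw [hI]
      rw [abs_of_nonneg (by linarith), abs_of_nonpos hneg.le]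
      ring
  · -- x > 0
    simp only [if_pos hpos, if_neg (not_lt.mpr hpos.le), if_neg (not_le.mpr hpos)]
    rcases le_or_gt y x with hxy | hyx
    · -- y ≤ x : integrand is 0 a.e.
      have hI : (∫ s in (0:ℝ)..y, ((if x ≤ s then (1:ℝ) else 0) - 0)) = 0 := by
        apply integral_zero_ae
        filter_upwards [ae_ne x] with s hsne hs
        have : s < x := lt_of_le_of_ne (hs.2.trans (max_le hpos.le hxy)) hsne
        simp [not_le.mpr this]
      rw [hI]
      rw [abs_of_nonneg (by linarith), abs_of_nonneg hpos.le]
      ring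
    · -- y > x > 0 : split at x
      have hsplit := integral_add_adjacent_intervals (a := (0:ℝ)) (b := x) (c := y)
        (f_integrable x 0 x) (f_integrable x x y)
      have h1 : (∫ s in (0:ℝ)..x, ((if x ≤ s then (1:ℝ) else 0) - (if x ≤ 0 then (1:ℝ) else 0))) = 0 := by
        apply integral_zero_ae
        filter_upwards [ae_ne x] with s hsne hs
        have : s < x := lt_of_le_of_ne (by simpa [max_eq_right hpos.le] using hs.2) hsne
        simp [not_le.mpr this, not_le.mpr hpos]
      have h2 : (∫ s in x..y, ((if x ≤ s then (1:ℝ) else 0) - (if x ≤ 0 then (1:ℝ) else 0))) = y - x := by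
        have : (∫ s in x..y, ((if x ≤ s then (1:ℝ) else 0) - (if x ≤ 0 then (1:ℝ) else 0)))
            = ∫ _ in x..y, (1 : ℝ) := by
          apply intervalIntegral.integral_congr_ae
          filter_upwards with s hs
          have : x < s := by simpa [min_eq_left hyx.le] using hs.1
          simp [this.le, not_le.mpr hpos]
        rw [this, intervalIntegral.integral_const]
        simp
      have hI : (∫ s in (0:ℝ)..y, ((if x ≤ s then (1:ℝ) else 0) - (if x ≤ 0 then (1:ℝ) else 0))) = y - x := by
        rw [← hsplit, h1, h2]; ring
      simp only [if_neg (not_le.mpr hpos)] at hI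
      rw [hI]
      rw [abs_of_nonpos (by linarith), abs_of_nonneg hpos.le]
      ring
end

section
/- Let m ≥ 1 and let Σ₀, Ω₀, Σ be real symmetric m×m matrices such that Ω₀ and Σ are positive definite, Σ₀ is invertible, and let κ > 0. Suppose that for all vectors b, c ∈ ℝ^m one has (cᵀ Σ₀ b)² ≤ κ (cᵀ Ω₀ c)(bᵀ Σ b). Then the matrix Σ₀⁻¹ Ω₀ Σ₀⁻¹ − (κ Σ)⁻¹ is positive semidefinite. -/
open Matrix

theorem Matrix.posSemidef_sub_inv_of_sq_dotProduct_le {n : Type*} [Fintype n] [DecidableEq n]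
    {T P Q : Matrix n n ℝ} (hT : IsUnit T.det) (hP : P.IsSymm) (hQ : Q.PosDef)
    (h : ∀ b c : n → ℝ, (c ⬝ᵥ T *ᵥ b) ^ 2 ≤ (c ⬝ᵥ P *ᵥ c) * (b ⬝ᵥ Q *ᵥ b)) :
    (T⁻¹ * P * T⁻¹ᵀ - Q⁻¹).PosSemidef := by
  have hsymm : (T⁻¹ * P * T⁻¹ᵀ).IsHermitian := by
    simpa [conjTranspose_eq_transpose_of_trivial] using
      isHermitian_mul_mul_conjTranspose T⁻¹ ((conjTranspose_eq_transpose_of_trivial P).trans hP)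
  refine .of_dotProduct_mulVec_nonneg (hsymm.sub hQ.inv.isHermitian) fun x => ?_
  rcases eq_or_ne x 0 with rfl | hx
  · simp
  set t := x ⬝ᵥ Q⁻¹ *ᵥ x
  have ht : 0 < t := by simpa using hQ.inv.dotProduct_mulVec_pos hx
  -- Test the hypothesis at `b = Q⁻¹ x`, `c = T⁻ᵀ x`: then `cᵀ T b = bᵀ Q b = t`, so `t² ≤ (cᵀ P c) t`.
  have hcTb : (x ᵥ* T⁻¹) ⬝ᵥ T *ᵥ (Q⁻¹ *ᵥ x) = t := by
    rw [dotProduct_mulVec, vecMul_vecMul, nonsing_inv_mul T hT, vecMul_one]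
  have hcPc : (x ᵥ* T⁻¹) ⬝ᵥ P *ᵥ (x ᵥ* T⁻¹) = x ⬝ᵥ (T⁻¹ * P * T⁻¹ᵀ) *ᵥ x := by
    rw [← dotProduct_mulVec, mulVec_mulVec, ← mulVec_transpose, mulVec_mulVec]
  have hbQb : (Q⁻¹ *ᵥ x) ⬝ᵥ Q *ᵥ (Q⁻¹ *ᵥ x) = t := by
    rw [mulVec_mulVec, mul_nonsing_inv Q hQ.det_pos.ne'.isUnit, one_mulVec, dotProduct_comm]
  have key := h (Q⁻¹ *ᵥ x) (x ᵥ* T⁻¹)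
  rw [hcTb, hcPc, hbQb, sq] at key
  simpa [sub_mulVec, dotProduct_sub] using le_of_mul_le_mul_right key ht

theorem sandwich_of_cauchy_schwarz_general (m : ℕ)
    (S0 O0 S : Matrix (Fin m) (Fin m) ℝ)
    (hS0sym : S0.IsSymm) (hO0sym : O0.IsSymm)
    (hS : S.PosDef) (hS0 : IsUnit S0.det)
    (κ : ℝ) (hκ : 0 < κ)
    (h : ∀ b c : Fin m → ℝ,
      (c ⬝ᵥ S0.mulVec b) ^ 2 ≤ κ * (c ⬝ᵥ O0.mulVec c) * (b ⬝ᵥ S.mulVec b)) :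
    (S0⁻¹ * O0 * S0⁻¹ - (κ • S)⁻¹).PosSemidef := by
  have hS0inv : S0⁻¹ᵀ = S0⁻¹ := by rw [transpose_nonsing_inv, hS0sym.eq]
  have h' : ∀ b c : Fin m → ℝ,
      (c ⬝ᵥ S0 *ᵥ b) ^ 2 ≤ (c ⬝ᵥ O0 *ᵥ c) * (b ⬝ᵥ (κ • S) *ᵥ b) := fun b c => by
    rw [smul_mulVec, dotProduct_smul, smul_eq_mul, ← mul_assoc, mul_comm _ κ]
    exact h b c
  simpa only [hS0inv] using posSemidef_sub_inv_of_sq_dotProduct_le hS0 hO0sym (hS.smul hκ) h'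

/-- From a pointwise Cauchy–Schwarz-type bound `(cᵀ Σ₀ b)² ≤ κ (cᵀ Ω₀ c)(bᵀ Σ b)`
one deduces the Loewner sandwich `Σ₀⁻¹ Ω₀ Σ₀⁻¹ ⪰ (κ Σ)⁻¹`. -/
theorem sandwich_of_cauchy_schwarz (m : ℕ) (hm : 1 ≤ m)
    (S0 O0 S : Matrix (Fin m) (Fin m) ℝ)
    (hS0sym : S0.IsSymm) (hO0sym : O0.IsSymm) (hSsym : S.IsSymm)
    (hO0 : O0.PosDef) (hS : S.PosDef) (hS0 : IsUnit S0.det)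
    (κ : ℝ) (hκ : 0 < κ)
    (h : ∀ b c : Fin m → ℝ,
      (c ⬝ᵥ S0.mulVec b) ^ 2 ≤ κ * (c ⬝ᵥ O0.mulVec c) * (b ⬝ᵥ S.mulVec b)) :
    (S0⁻¹ * O0 * S0⁻¹ - (κ • S)⁻¹).PosSemidef :=
  sandwich_of_cauchy_schwarz_general m S0 O0 S hS0sym hO0sym hS hS0 κ hκ h
end

section
/- Let (Ω, ℱ, P) be a probability space, let X : Ω → ℝ^m be a random vector with E‖X‖² < ∞, let w : Ω → ℝ be measurable with 0 ≤ w ≤ K almost surely for some constant K, and let g₀ > 0. Define Ω₀ = E[w² X Xᵀ], Σ₀ = g₀ E[w X Xᵀ], Ωm = E[X Xᵀ] and Σ = g₀ Ωm, and assume Ω₀ and Ωm are positive definite and Σ₀ is invertible. Then Σ₀⁻¹ Ω₀ Σ₀⁻¹ − Σ⁻¹ Ωm Σ⁻¹ is positive semidefinite. -/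
/-!
The second-moment matrix of the stacked vector `(w X, X)` is positive semidefinite, so its Schur
complement `E[w² X Xᵀ] - A Ωm⁻¹ A` with respect to the block `Ωm`, where `A = E[w X Xᵀ]`, is too.
Conjugating by `A⁻¹` turns this into `A⁻¹ Ω₀ A⁻¹ - Ωm⁻¹ ≥ 0`, which is the claim after scaling
by `g₀⁻²`.
-/

open MeasureTheory Matrix

theorem MeasureTheory.posSemidef_matrix_integral_mul {Ω ι : Type*} [MeasurableSpace Ω]
    {μ : Measure Ω} [Finite ι] {Y : ι → Ω → ℝ} (hY : ∀ i, MemLp (Y i) 2 μ) :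
    (Matrix.of fun i j => ∫ ω, Y i ω * Y j ω ∂μ).PosSemidef := by
  suffices h : (Matrix.of fun i j => ∫ ω, Y i ω * Y j ω ∂μ) = gram ℝ fun i => (hY i).toLp (Y i) by
    exact h ▸ posSemidef_gram ℝ _
  ext i j
  rw [of_apply, gram_apply, L2.inner_def]
  refine integral_congr_ae ?_
  filter_upwards [(hY i).coeFn_toLp, (hY j).coeFn_toLp] with ω hi hj
  simp [hi, hj, mul_comm]

theorem MeasureTheory.posSemidef_fromBlocks_integral_weighted_mul {Ω ι : Type*}
    [MeasurableSpace Ω] {μ : Measure Ω} [Finite ι] {X : Ω → ι → ℝ} {w : Ω → ℝ}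
    (hX : ∀ i, MemLp (X · i) 2 μ) (hw : MemLp w ⊤ μ) :
    (fromBlocks (of fun i j => ∫ ω, w ω ^ 2 * X ω i * X ω j ∂μ)
      (of fun i j => ∫ ω, w ω * X ω i * X ω j ∂μ)
      (of fun i j => ∫ ω, w ω * X ω i * X ω j ∂μ)ᴴ
      (of fun i j => ∫ ω, X ω i * X ω j ∂μ)).PosSemidef := by
  convert posSemidef_matrix_integral_mul (Y := Sum.elim (fun i ω => w ω * X ω i) fun i => (X · i))
    (Sum.forall.2 ⟨fun i => (hX i).mul' hw, hX⟩) using 1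
  ext (i | i) (j | j) <;>
    simp only [fromBlocks_apply₁₁, fromBlocks_apply₁₂, fromBlocks_apply₂₁, fromBlocks_apply₂₂,
      conjTranspose_apply, of_apply, star_trivial, Sum.elim_inl, Sum.elim_inr] <;>
    congr 1 <;> ext ω <;> ring

theorem Matrix.PosSemidef.inv_mul_mul_inv_sub_inv_of_fromBlocks {n R : Type*} [Fintype n]
    [DecidableEq n] [Field R] [PartialOrder R] [StarRing R] [StarOrderedRing R]
    {A B D : Matrix n n R} (h : (fromBlocks A B Bᴴ D).PosSemidef) (hD : D.PosDef)
    (hB : IsUnit B.det) : (B⁻¹ * A * B⁻¹ᴴ - D⁻¹).PosSemidef := by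
  have := hD.isUnit.invertible
  have hschur := ((PosDef.fromBlocks₂₂ A B hD).1 h).mul_mul_conjTranspose_same B⁻¹
  have hcancel : B⁻¹ * (B * D⁻¹ * Bᴴ) * B⁻¹ᴴ = D⁻¹ := by
    rw [conjTranspose_nonsing_inv, ← Matrix.mul_assoc, ← Matrix.mul_assoc, nonsing_inv_mul _ hB,
      Matrix.one_mul, Matrix.mul_assoc, mul_nonsing_inv _ (det_conjTranspose B ▸ hB.star),
      Matrix.mul_one]
  rwa [Matrix.mul_sub, Matrix.sub_mul, hcancel] at hschur

theorem selfweighted_vs_local_qmele_arma_general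
    {Ω : Type*} [MeasurableSpace Ω] (P : Measure Ω) [IsProbabilityMeasure P]
    (m : ℕ) (X : Ω → Fin m → ℝ) (hX : Measurable X)
    (hX2 : Integrable (fun ω => ‖X ω‖ ^ 2) P)
    (w : Ω → ℝ) (hw : Measurable w) (K : ℝ)
    (hw0 : ∀ᵐ ω ∂P, 0 ≤ w ω) (hwK : ∀ᵐ ω ∂P, w ω ≤ K)
    (g₀ : ℝ) (hg₀ : 0 < g₀)
    (O0 S0 Om S : Matrix (Fin m) (Fin m) ℝ)
    (hO0 : O0 = Matrix.of fun i j => ∫ ω, (w ω) ^ 2 * X ω i * X ω j ∂P)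
    (hS0 : S0 = g₀ • Matrix.of fun i j => ∫ ω, w ω * X ω i * X ω j ∂P)
    (hOm : Om = Matrix.of fun i j => ∫ ω, X ω i * X ω j ∂P)
    (hS : S = g₀ • Om)
    (hOmpd : Om.PosDef) (hS0inv : IsUnit S0.det) :
    (S0⁻¹ * O0 * S0⁻¹ - S⁻¹ * Om * S⁻¹).PosSemidef := by
  set A : Matrix (Fin m) (Fin m) ℝ := of fun i j => ∫ ω, w ω * X ω i * X ω j ∂P
  have hXL2 : ∀ i, MemLp (X · i) 2 P :=
    ((memLp_two_iff_integrable_sq_norm hX.aestronglyMeasurable).2 hX2).eval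
  have hwLinf : MemLp w ⊤ P := memLp_top_of_bound hw.aestronglyMeasurable K <| by
    filter_upwards [hw0, hwK] with ω h0 hK
    rwa [Real.norm_of_nonneg h0]
  have hblock := posSemidef_fromBlocks_integral_weighted_mul hXL2 hwLinf
  rw [← hO0, ← hOm] at hblock
  have hA : IsUnit A.det := by
    rw [hS0, det_smul] at hS0inv
    exact isUnit_of_mul_isUnit_right hS0inv
  have hAherm : A.IsHermitian := by
    ext i j
    simp only [A, conjTranspose_apply, of_apply, star_trivial]
    congr 1; ext ω; ring
  have hOmdet : IsUnit Om.det := (isUnit_iff_isUnit_det Om).1 hOmpd.isUnit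
  have := invertibleOfNonzero hg₀.ne'
  have hscale : g₀⁻¹ • A⁻¹ * O0 * g₀⁻¹ • A⁻¹ - g₀⁻¹ • Om⁻¹ * Om * g₀⁻¹ • Om⁻¹
      = g₀⁻¹ ^ 2 • (A⁻¹ * O0 * A⁻¹ᴴ - Om⁻¹) := by
    simp only [hAherm.inv.eq, sq, smul_sub, smul_mul_assoc, mul_smul_comm, smul_smul,
      nonsing_inv_mul _ hOmdet, Matrix.one_mul]
  rw [hS0, hS, Matrix.inv_smul A g₀ hA, Matrix.inv_smul Om g₀ hOmdet, invOf_eq_inv, hscale]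
  exact (hblock.inv_mul_mul_inv_sub_inv_of_fromBlocks hOmpd hA).smul (sq_nonneg g₀⁻¹)

/-- Pure ARMA case: the local QMELE is asymptotically at least as efficient as the
self-weighted QMELE, i.e. `Σ₀⁻¹ Ω₀ Σ₀⁻¹ - Σ⁻¹ Ωm Σ⁻¹` is positive semidefinite,
where `Ω₀ = E[w² X Xᵀ]`, `Σ₀ = g₀ E[w X Xᵀ]`, `Ωm = E[X Xᵀ]`, `Σ = g₀ Ωm`. -/
theorem selfweighted_vs_local_qmele_arma
    {Ω : Type*} [MeasurableSpace Ω] (P : Measure Ω) [IsProbabilityMeasure P]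
    (m : ℕ) (X : Ω → Fin m → ℝ) (hX : Measurable X)
    (hX2 : Integrable (fun ω => ‖X ω‖ ^ 2) P)
    (w : Ω → ℝ) (hw : Measurable w) (K : ℝ)
    (hw0 : ∀ᵐ ω ∂P, 0 ≤ w ω) (hwK : ∀ᵐ ω ∂P, w ω ≤ K)
    (g₀ : ℝ) (hg₀ : 0 < g₀)
    (O0 S0 Om S : Matrix (Fin m) (Fin m) ℝ)
    (hO0 : O0 = Matrix.of fun i j => ∫ ω, (w ω) ^ 2 * X ω i * X ω j ∂P)
    (hS0 : S0 = g₀ • Matrix.of fun i j => ∫ ω, w ω * X ω i * X ω j ∂P)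
    (hOm : Om = Matrix.of fun i j => ∫ ω, X ω i * X ω j ∂P)
    (hS : S = g₀ • Om)
    (hO0pd : O0.PosDef) (hOmpd : Om.PosDef) (hS0inv : IsUnit S0.det) :
    (S0⁻¹ * O0 * S0⁻¹ - S⁻¹ * Om * S⁻¹).PosSemidef :=
  selfweighted_vs_local_qmele_arma_general P m X hX hX2 w hw K hw0 hwK g₀ hg₀ O0 S0 Om S hO0 hS0 hOm
    hS hOmpd hS0inv
end

section
/- Let (Ω, ℱ, P) be a probability space, let X₁, X₂ : Ω → ℝ^m be random vectors with E‖X₁‖² < ∞ and E‖X₂‖² < ∞, and let w : Ω → ℝ be measurable with 0 ≤ w ≤ K almost surely for some constant K. Define Σ₀ = E[w(½ X₁X₁ᵀ + ⅛ X₂X₂ᵀ)], Ω₀ = E[w²(X₁X₁ᵀ + ¼ X₂X₂ᵀ)] and Σ = E[½ X₁X₁ᵀ + ⅛ X₂X₂ᵀ]. Then for all vectors b, c ∈ ℝ^m, (cᵀ Σ₀ b)² ≤ ½ (cᵀ Ω₀ c)(bᵀ Σ b). -/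
open MeasureTheory Matrix

/-- Two-term Cauchy–Schwarz for integrals, proven via the discriminant. -/
lemma cs2_aux {Ω : Type*} [MeasurableSpace Ω] (μ : Measure Ω) {α β : ℝ}
    (hα : 0 ≤ α) (hβ : 0 ≤ β) (f₁ f₂ g₁ g₂ : Ω → ℝ)
    (hf₁ : Integrable (fun ω => f₁ ω * f₁ ω) μ)
    (hf₂ : Integrable (fun ω => f₂ ω * f₂ ω) μ)
    (hg₁ : Integrable (fun ω => g₁ ω * g₁ ω) μ)
    (hg₂ : Integrable (fun ω => g₂ ω * g₂ ω) μ)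
    (h₁ : Integrable (fun ω => f₁ ω * g₁ ω) μ)
    (h₂ : Integrable (fun ω => f₂ ω * g₂ ω) μ) :
    (∫ ω, α * (f₁ ω * g₁ ω) + β * (f₂ ω * g₂ ω) ∂μ) ^ 2 ≤
      (∫ ω, α * (f₁ ω * f₁ ω) + β * (f₂ ω * f₂ ω) ∂μ) *
      (∫ ω, α * (g₁ ω * g₁ ω) + β * (g₂ ω * g₂ ω) ∂μ) := by
  set A := ∫ ω, α * (f₁ ω * f₁ ω) + β * (f₂ ω * f₂ ω) ∂μ with hA
  set B := ∫ ω, α * (f₁ ω * g₁ ω) + β * (f₂ ω * g₂ ω) ∂μ with hB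
  set C := ∫ ω, α * (g₁ ω * g₁ ω) + β * (g₂ ω * g₂ ω) ∂μ with hC
  have hIA : Integrable (fun ω => α * (f₁ ω * f₁ ω) + β * (f₂ ω * f₂ ω)) μ :=
    (hf₁.const_mul α).add (hf₂.const_mul β)
  have hIB : Integrable (fun ω => α * (f₁ ω * g₁ ω) + β * (f₂ ω * g₂ ω)) μ :=
    (h₁.const_mul α).add (h₂.const_mul β)
  have hIC : Integrable (fun ω => α * (g₁ ω * g₁ ω) + β * (g₂ ω * g₂ ω)) μ :=
    (hg₁.const_mul α).add (hg₂.const_mul β)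
  have key : ∀ t : ℝ, 0 ≤ A * (t * t) + (2 * B) * t + C := by
    intro t
    have h0 : 0 ≤ ∫ ω, α * ((t * f₁ ω + g₁ ω) * (t * f₁ ω + g₁ ω))
        + β * ((t * f₂ ω + g₂ ω) * (t * f₂ ω + g₂ ω)) ∂μ := by
      refine integral_nonneg fun ω => ?_
      have := mul_self_nonneg (t * f₁ ω + g₁ ω)
      have := mul_self_nonneg (t * f₂ ω + g₂ ω)
      positivity
    have heq : ∫ ω, α * ((t * f₁ ω + g₁ ω) * (t * f₁ ω + g₁ ω))
        + β * ((t * f₂ ω + g₂ ω) * (t * f₂ ω + g₂ ω)) ∂μ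
        = A * (t * t) + (2 * B) * t + C := by
      have hfun : (fun ω => α * ((t * f₁ ω + g₁ ω) * (t * f₁ ω + g₁ ω))
          + β * ((t * f₂ ω + g₂ ω) * (t * f₂ ω + g₂ ω)))
          = fun ω => (t * t) * (α * (f₁ ω * f₁ ω) + β * (f₂ ω * f₂ ω))
            + ((2 * t) * (α * (f₁ ω * g₁ ω) + β * (f₂ ω * g₂ ω))
              + (α * (g₁ ω * g₁ ω) + β * (g₂ ω * g₂ ω))) := by
        funext ω; ring
      have hBC : Integrable (fun ω => (2 * t) * (α * (f₁ ω * g₁ ω) + β * (f₂ ω * g₂ ω))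
          + (α * (g₁ ω * g₁ ω) + β * (g₂ ω * g₂ ω))) μ := (hIB.const_mul _).add hIC
      rw [hfun, integral_add (hIA.const_mul (t * t)) hBC]
      rw [integral_add (hIB.const_mul (2 * t)) hIC]
      rw [integral_const_mul, integral_const_mul, ← hA, ← hB, ← hC]
      ring
    linarith [heq ▸ h0]
  have hd := discrim_le_zero key
  rw [discrim] at hd
  nlinarith [hd]

/-- A quadratic form in entrywise integrals equals the integral of the quadratic form. -/
lemma dot_int_aux {Ω : Type*} [MeasurableSpace Ω] (P : Measure Ω) {m : ℕ}
    (c b : Fin m → ℝ) (h : Fin m → Fin m → Ω → ℝ)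
    (hint : ∀ i j, Integrable (h i j) P) :
    c ⬝ᵥ (Matrix.of fun i j => ∫ ω, h i j ω ∂P).mulVec b
      = ∫ ω, ∑ i, ∑ j, c i * h i j ω * b j ∂P := by
  have hg : ∀ i j, Integrable (fun ω => c i * h i j ω * b j) P :=
    fun i j => ((hint i j).const_mul (c i)).mul_const (b j)
  calc c ⬝ᵥ (Matrix.of fun i j => ∫ ω, h i j ω ∂P).mulVec b
      = ∑ i, ∑ j, c i * (∫ ω, h i j ω ∂P) * b j := by
        simp [dotProduct, mulVec, Finset.mul_sum, mul_assoc]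
    _ = ∑ i, ∑ j, ∫ ω, c i * h i j ω * b j ∂P := by
        refine Finset.sum_congr rfl fun i _ => Finset.sum_congr rfl fun j _ => ?_
        rw [← integral_const_mul, ← integral_mul_const]
    _ = ∑ i, ∫ ω, ∑ j, c i * h i j ω * b j ∂P := by
        refine Finset.sum_congr rfl fun i _ => ?_
        rw [← integral_finset_sum _ fun j _ => hg i j]
    _ = ∫ ω, ∑ i, ∑ j, c i * h i j ω * b j ∂P := by
        rw [← integral_finset_sum _ fun i _ => integrable_finset_sum _ fun j _ => hg i j]

/-- Pointwise expansion of the double sum as a product of dot products. -/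
lemma sum_id_aux {m : ℕ} (c b x y : Fin m → ℝ) (W a d : ℝ) :
    ∑ i, ∑ j, c i * (W * (a * x i * x j + d * y i * y j)) * b j
      = W * (a * ((c ⬝ᵥ x) * (b ⬝ᵥ x)) + d * ((c ⬝ᵥ y) * (b ⬝ᵥ y))) := by
  simp only [dotProduct, Finset.sum_mul, Finset.mul_sum, ← Finset.sum_add_distrib]
  rw [Finset.sum_comm]
  refine Finset.sum_congr rfl fun i _ => Finset.sum_congr rfl fun j _ => by ring

/-- Two-term Cauchy–Schwarz inequality (Laplace case of Section 3):
`(cᵀ Σ₀ b)² ≤ ½ (cᵀ Ω₀ c)(bᵀ Σ b)` where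
`Σ₀ = E[w(½X₁X₁ᵀ + ⅛X₂X₂ᵀ)]`, `Ω₀ = E[w²(X₁X₁ᵀ + ¼X₂X₂ᵀ)]`,
`Σ = E[½X₁X₁ᵀ + ⅛X₂X₂ᵀ]`. -/
theorem two_term_cauchy_schwarz
    {Ω : Type*} [MeasurableSpace Ω] (P : Measure Ω) [IsProbabilityMeasure P]
    (m : ℕ) (X₁ X₂ : Ω → Fin m → ℝ) (hX₁ : Measurable X₁) (hX₂ : Measurable X₂)
    (hX₁2 : Integrable (fun ω => ‖X₁ ω‖ ^ 2) P)
    (hX₂2 : Integrable (fun ω => ‖X₂ ω‖ ^ 2) P)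
    (w : Ω → ℝ) (hw : Measurable w) (K : ℝ)
    (hw0 : ∀ᵐ ω ∂P, 0 ≤ w ω) (hwK : ∀ᵐ ω ∂P, w ω ≤ K)
    (b c : Fin m → ℝ) :
    (c ⬝ᵥ (Matrix.of fun i j =>
        ∫ ω, w ω * ((1/2) * X₁ ω i * X₁ ω j + (1/8) * X₂ ω i * X₂ ω j) ∂P).mulVec b) ^ 2 ≤
      (1/2) *
        (c ⬝ᵥ (Matrix.of fun i j =>
          ∫ ω, (w ω) ^ 2 * (X₁ ω i * X₁ ω j + (1/4) * X₂ ω i * X₂ ω j) ∂P).mulVec c) *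
        (b ⬝ᵥ (Matrix.of fun i j =>
          ∫ ω, ((1/2) * X₁ ω i * X₁ ω j + (1/8) * X₂ ω i * X₂ ω j) ∂P).mulVec b) := by
  -- basic bounds on w
  set M := max K 0 with hMdef
  have hM : 0 ≤ M := le_max_right _ _
  have hwb : ∀ᵐ ω ∂P, ‖w ω‖ ≤ M := by
    filter_upwards [hw0, hwK] with ω h0 hK
    rw [Real.norm_eq_abs, abs_of_nonneg h0]
    exact le_trans hK (le_max_left _ _)
  have hw2b : ∀ᵐ ω ∂P, ‖(w ω) ^ 2‖ ≤ M ^ 2 := by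
    filter_upwards [hwb] with ω hb
    rw [Real.norm_eq_abs, abs_pow]
    exact pow_le_pow_left₀ (abs_nonneg _) (by rwa [Real.norm_eq_abs] at hb) 2
  -- measurability of dot products
  have hdm : ∀ (Y : Ω → Fin m → ℝ), Measurable Y → ∀ a : Fin m → ℝ,
      Measurable (fun ω => a ⬝ᵥ Y ω) := by
    intro Y hY a
    simp only [dotProduct]
    exact Finset.measurable_sum _ fun i _ =>
      measurable_const.mul ((measurable_pi_apply i).comp hY)
  -- bound on dot products
  have hdb : ∀ (Y : Ω → Fin m → ℝ) (a : Fin m → ℝ) (ω : Ω),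
      |a ⬝ᵥ Y ω| ≤ (∑ i, |a i|) * ‖Y ω‖ := by
    intro Y a ω
    calc |∑ i, a i * Y ω i| ≤ ∑ i, |a i * Y ω i| := Finset.abs_sum_le_sum_abs _ _
      _ ≤ ∑ i, |a i| * ‖Y ω‖ := by
          refine Finset.sum_le_sum fun i _ => ?_
          rw [abs_mul]
          have h := norm_le_pi_norm (Y ω) i
          rw [Real.norm_eq_abs] at h
          exact mul_le_mul_of_nonneg_left h (abs_nonneg _)
      _ = (∑ i, |a i|) * ‖Y ω‖ := (Finset.sum_mul _ _ _).symm
  -- integrability of weighted products of dot products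
  have hprod : ∀ (Y : Ω → Fin m → ℝ), Measurable Y → Integrable (fun ω => ‖Y ω‖ ^ 2) P →
      ∀ (a e : Fin m → ℝ) (w₁ w₂ : Ω → ℝ), Measurable w₁ → Measurable w₂ →
      ∀ (M₁ M₂ : ℝ), 0 ≤ M₁ → 0 ≤ M₂ →
      (∀ᵐ ω ∂P, ‖w₁ ω‖ ≤ M₁) → (∀ᵐ ω ∂P, ‖w₂ ω‖ ≤ M₂) →
      Integrable (fun ω => (w₁ ω * (a ⬝ᵥ Y ω)) * (w₂ ω * (e ⬝ᵥ Y ω))) P := by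
    intro Y hY hY2 a e w₁ w₂ hw₁ hw₂ M₁ M₂ hM₁ hM₂ hb₁ hb₂
    have hCa : (0:ℝ) ≤ ∑ i, |a i| := Finset.sum_nonneg fun i _ => abs_nonneg _
    have hCe : (0:ℝ) ≤ ∑ i, |e i| := Finset.sum_nonneg fun i _ => abs_nonneg _
    refine Integrable.mono' (g := fun ω =>
        (M₁ * ((∑ i, |a i|)) * (M₂ * (∑ i, |e i|))) * ‖Y ω‖ ^ 2)
        (hY2.const_mul _) ?_ ?_
    · exact ((hw₁.mul (hdm Y hY a)).mul (hw₂.mul (hdm Y hY e))).aestronglyMeasurable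
    · filter_upwards [hb₁, hb₂] with ω h1 h2
      rw [Real.norm_eq_abs, abs_mul, abs_mul, abs_mul]
      rw [Real.norm_eq_abs] at h1 h2
      calc |w₁ ω| * |a ⬝ᵥ Y ω| * (|w₂ ω| * |e ⬝ᵥ Y ω|)
          ≤ (M₁ * ((∑ i, |a i|) * ‖Y ω‖)) * (M₂ * ((∑ i, |e i|) * ‖Y ω‖)) := by
            refine mul_le_mul (mul_le_mul h1 (hdb Y a ω) (abs_nonneg _) hM₁)
              (mul_le_mul h2 (hdb Y e ω) (abs_nonneg _) hM₂)
              (mul_nonneg (abs_nonneg _) (abs_nonneg _)) ?_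
            positivity
        _ = (M₁ * (∑ i, |a i|) * (M₂ * (∑ i, |e i|))) * ‖Y ω‖ ^ 2 := by ring
  -- integrability of entrywise products
  have hEnt : ∀ (Y : Ω → Fin m → ℝ), Measurable Y → Integrable (fun ω => ‖Y ω‖ ^ 2) P →
      ∀ i j, Integrable (fun ω => Y ω i * Y ω j) P := by
    intro Y hY hY2 i j
    refine Integrable.mono' hY2
      (((measurable_pi_apply i).comp hY).mul ((measurable_pi_apply j).comp hY)).aestronglyMeasurable
      (Filter.Eventually.of_forall fun ω => ?_)
    rw [Real.norm_eq_abs, abs_mul, pow_two]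
    exact mul_le_mul ((Real.norm_eq_abs _ ▸ norm_le_pi_norm (Y ω) i))
      ((Real.norm_eq_abs _ ▸ norm_le_pi_norm (Y ω) j)) (abs_nonneg _) (norm_nonneg _)
  have hE1 := hEnt X₁ hX₁ hX₁2
  have hE2 := hEnt X₂ hX₂ hX₂2
  -- integrability of the matrix entries
  have hEntC : ∀ (a d : ℝ) (i j : Fin m),
      Integrable (fun ω => a * X₁ ω i * X₁ ω j + d * X₂ ω i * X₂ ω j) P := by
    intro a d i j
    have h : Integrable (fun ω => a * (X₁ ω i * X₁ ω j) + d * (X₂ ω i * X₂ ω j)) P :=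
      ((hE1 i j).const_mul a).add ((hE2 i j).const_mul d)
    exact h.congr (Filter.Eventually.of_forall fun ω => by ring)
  have hint1 : ∀ i j, Integrable
      (fun ω => w ω * ((1/2) * X₁ ω i * X₁ ω j + (1/8) * X₂ ω i * X₂ ω j)) P :=
    fun i j => (hEntC (1/2) (1/8) i j).bdd_mul hw.aestronglyMeasurable hwb
  have hint2 : ∀ i j, Integrable
      (fun ω => (w ω) ^ 2 * (X₁ ω i * X₁ ω j + (1/4) * X₂ ω i * X₂ ω j)) P := by
    intro i j
    have h : Integrable (fun ω => 1 * X₁ ω i * X₁ ω j + (1/4) * X₂ ω i * X₂ ω j) P :=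
      hEntC 1 (1/4) i j
    have h' : Integrable (fun ω => X₁ ω i * X₁ ω j + (1/4) * X₂ ω i * X₂ ω j) P :=
      h.congr (Filter.Eventually.of_forall fun ω => by ring)
    exact h'.bdd_mul (hw.pow_const 2).aestronglyMeasurable hw2b
  have hint3 : ∀ i j, Integrable
      (fun ω => (1/2) * X₁ ω i * X₁ ω j + (1/8) * X₂ ω i * X₂ ω j) P :=
    hEntC (1/2) (1/8)
  -- rewrite the three quadratic forms as integrals
  rw [dot_int_aux P c b _ hint1, dot_int_aux P c c _ hint2, dot_int_aux P b b _ hint3]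
  -- abbreviations
  set f₁ : Ω → ℝ := fun ω => w ω * (c ⬝ᵥ X₁ ω) with hf₁def
  set f₂ : Ω → ℝ := fun ω => w ω * (c ⬝ᵥ X₂ ω) with hf₂def
  set g₁ : Ω → ℝ := fun ω => 1 * (b ⬝ᵥ X₁ ω) with hg₁def
  set g₂ : Ω → ℝ := fun ω => 1 * (b ⬝ᵥ X₂ ω) with hg₂def
  have hone : ∀ᵐ ω ∂P, ‖(1:ℝ)‖ ≤ (1:ℝ) := Filter.Eventually.of_forall fun _ => by norm_num
  have hIff₁ : Integrable (fun ω => f₁ ω * f₁ ω) P :=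
    hprod X₁ hX₁ hX₁2 c c w w hw hw M M hM hM hwb hwb
  have hIff₂ : Integrable (fun ω => f₂ ω * f₂ ω) P :=
    hprod X₂ hX₂ hX₂2 c c w w hw hw M M hM hM hwb hwb
  have hIgg₁ : Integrable (fun ω => g₁ ω * g₁ ω) P :=
    hprod X₁ hX₁ hX₁2 b b (fun _ => 1) (fun _ => 1) measurable_const measurable_const
      1 1 zero_le_one zero_le_one hone hone
  have hIgg₂ : Integrable (fun ω => g₂ ω * g₂ ω) P :=
    hprod X₂ hX₂ hX₂2 b b (fun _ => 1) (fun _ => 1) measurable_const measurable_const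
      1 1 zero_le_one zero_le_one hone hone
  have hIfg₁ : Integrable (fun ω => f₁ ω * g₁ ω) P :=
    hprod X₁ hX₁ hX₁2 c b w (fun _ => 1) hw measurable_const M 1 hM zero_le_one hwb hone
  have hIfg₂ : Integrable (fun ω => f₂ ω * g₂ ω) P :=
    hprod X₂ hX₂ hX₂2 c b w (fun _ => 1) hw measurable_const M 1 hM zero_le_one hwb hone
  have key := cs2_aux P (by norm_num : (0:ℝ) ≤ 1/2) (by norm_num : (0:ℝ) ≤ 1/8)
    f₁ f₂ g₁ g₂ hIff₁ hIff₂ hIgg₁ hIgg₂ hIfg₁ hIfg₂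
  -- identify the three integrals with those appearing in `key`
  have e₁ : ∫ ω, ∑ i, ∑ j, c i * (w ω * ((1/2) * X₁ ω i * X₁ ω j
      + (1/8) * X₂ ω i * X₂ ω j)) * b j ∂P
      = ∫ ω, (1/2) * (f₁ ω * g₁ ω) + (1/8) * (f₂ ω * g₂ ω) ∂P := by
    refine integral_congr_ae (Filter.Eventually.of_forall fun ω => ?_)
    simp only [hf₁def, hf₂def, hg₁def, hg₂def]
    rw [sum_id_aux c b (X₁ ω) (X₂ ω) (w ω) (1/2) (1/8)]
    ring
  have e₂ : ∫ ω, ∑ i, ∑ j, c i * ((w ω) ^ 2 * (X₁ ω i * X₁ ω j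
      + (1/4) * X₂ ω i * X₂ ω j)) * c j ∂P
      = 2 * ∫ ω, (1/2) * (f₁ ω * f₁ ω) + (1/8) * (f₂ ω * f₂ ω) ∂P := by
    rw [← integral_const_mul]
    refine integral_congr_ae (Filter.Eventually.of_forall fun ω => ?_)
    have hs := sum_id_aux c c (X₁ ω) (X₂ ω) ((w ω) ^ 2) 1 (1/4)
    simp only [one_mul] at hs
    simp only [hf₁def, hf₂def]
    rw [hs]
    ring
  have e₃ : ∫ ω, ∑ i, ∑ j, b i * ((1/2) * X₁ ω i * X₁ ω j
      + (1/8) * X₂ ω i * X₂ ω j) * b j ∂P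
      = ∫ ω, (1/2) * (g₁ ω * g₁ ω) + (1/8) * (g₂ ω * g₂ ω) ∂P := by
    refine integral_congr_ae (Filter.Eventually.of_forall fun ω => ?_)
    have hs := sum_id_aux b b (X₁ ω) (X₂ ω) 1 (1/2) (1/8)
    simp only [one_mul] at hs
    simp only [hg₁def, hg₂def]
    rw [hs]
    ring
  rw [e₁, e₂, e₃]
  calc (∫ ω, (1/2) * (f₁ ω * g₁ ω) + (1/8) * (f₂ ω * g₂ ω) ∂P) ^ 2
      ≤ (∫ ω, (1/2) * (f₁ ω * f₁ ω) + (1/8) * (f₂ ω * f₂ ω) ∂P) *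
        (∫ ω, (1/2) * (g₁ ω * g₁ ω) + (1/8) * (g₂ ω * g₂ ω) ∂P) := key
    _ = 1/2 * (2 * ∫ ω, (1/2) * (f₁ ω * f₁ ω) + (1/8) * (f₂ ω * f₂ ω) ∂P) *
        (∫ ω, (1/2) * (g₁ ω * g₁ ω) + (1/8) * (g₂ ω * g₂ ω) ∂P) := by ring
end

section
/- Let (Ω, ℱ, P) be a probability space, let X₁, X₂ : Ω → ℝ^m be random vectors with E‖X₁‖² < ∞ and E‖X₂‖² < ∞, and let w : Ω → ℝ be measurable with 0 ≤ w ≤ K almost surely for some constant K. Define Σ₀ = E[w(½ X₁X₁ᵀ + ⅛ X₂X₂ᵀ)], Ω₀ = E[w²(X₁X₁ᵀ + ¼ X₂X₂ᵀ)] and Σ = E[½ X₁X₁ᵀ + ⅛ X₂X₂ᵀ], and assume Ω₀ and Σ are positive definite and Σ₀ is invertible. Then Σ₀⁻¹ Ω₀ Σ₀⁻¹ − 2Σ⁻¹ is positive semidefinite. -/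
/-!
Write `G = ½ X₁X₁ᵀ + ⅛ X₂X₂ᵀ` (`qmeleGram X₁ X₂`), so that `Σ = E[G]`, `Σ₀ = E[wG]` and
`½ Ω₀ = E[w²G]`. Pointwise the block matrix `[[w²G, wG], [wG, G]] = [w I, I]ᵀ G [w I, I]`
is positive semidefinite, hence so is its expectation `[[½ Ω₀, Σ₀], [Σ₀, Σ]]`. Its Schur
complement `½ Ω₀ - Σ₀ Σ⁻¹ Σ₀` is then positive semidefinite (a matrix Cauchy–Schwarz
inequality), and conjugating by the symmetric matrix `Σ₀⁻¹` gives `½ Σ₀⁻¹ Ω₀ Σ₀⁻¹ - Σ⁻¹ ⪰ 0`.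
-/

open MeasureTheory Matrix

section MatrixIntegral

variable {Ω : Type*} [MeasurableSpace Ω] {μ : Measure Ω} {n : Type*}

noncomputable def matrixIntegral (A : Ω → Matrix n n ℝ) (μ : Measure Ω) : Matrix n n ℝ :=
  of fun i j => ∫ ω, A ω i j ∂μ

theorem isHermitian_matrixIntegral {A : Ω → Matrix n n ℝ} (hA : ∀ᵐ ω ∂μ, (A ω).IsHermitian) :
    (matrixIntegral A μ).IsHermitian := by
  ext i j
  refine integral_congr_ae ?_
  filter_upwards [hA] with ω h
  exact h.apply i j

variable [Fintype n]

theorem dotProduct_matrixIntegral_mulVec {A : Ω → Matrix n n ℝ}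
    (hA : ∀ i j, Integrable (fun ω => A ω i j) μ) (x y : n → ℝ) :
    x ⬝ᵥ matrixIntegral A μ *ᵥ y = ∫ ω, x ⬝ᵥ A ω *ᵥ y ∂μ := by
  simp only [dotProduct, mulVec, matrixIntegral, of_apply, Finset.mul_sum]
  rw [integral_finsetSum _ fun i _ => integrable_finsetSum _ fun j _ =>
    ((hA i j).mul_const _).const_mul _]
  refine Finset.sum_congr rfl fun i _ => ?_
  rw [integral_finsetSum _ fun j _ => ((hA i j).mul_const _).const_mul _]
  simp only [integral_const_mul, integral_mul_const]

theorem posSemidef_matrixIntegral {A : Ω → Matrix n n ℝ}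
    (hA : ∀ i j, Integrable (fun ω => A ω i j) μ) (hpsd : ∀ᵐ ω ∂μ, (A ω).PosSemidef) :
    (matrixIntegral A μ).PosSemidef := by
  refine .of_dotProduct_mulVec_nonneg (isHermitian_matrixIntegral (hpsd.mono fun _ h => h.1))
    fun x => ?_
  rw [star_trivial, dotProduct_matrixIntegral_mulVec hA]
  exact integral_nonneg_of_ae (hpsd.mono fun ω h => by simpa using h.dotProduct_mulVec_nonneg x)

theorem integrable_apply_mul_apply {X : Ω → n → ℝ} (hX : AEStronglyMeasurable X μ)
    (hX2 : Integrable (fun ω => ‖X ω‖ ^ 2) μ) (i j : n) :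
    Integrable (fun ω => X ω i * X ω j) μ := by
  have hL2 := memLp_pi_iff.1 ((memLp_two_iff_integrable_sq_norm hX).2 hX2)
  exact (hL2 i).integrable_mul (hL2 j)

variable [DecidableEq n]

theorem Matrix.PosSemidef.fromBlocks_sq_smul {G : Matrix n n ℝ} (hG : G.PosSemidef) (v : ℝ) :
    (fromBlocks (v ^ 2 • G) (v • G) (v • G) G).PosSemidef := by
  have h := hG.conjTranspose_mul_mul_same (fromCols (v • (1 : Matrix n n ℝ)) (1 : Matrix n n ℝ))
  convert h using 1
  rw [conjTranspose_fromCols_eq_fromRows_conjTranspose, fromRows_mul, fromRows_mul_fromCols]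
  simp [pow_two, smul_smul]

theorem posSemidef_matrixIntegral_sq_smul_sub {G : Ω → Matrix n n ℝ} {v : Ω → ℝ} {C : ℝ}
    (hG : ∀ i j, Integrable (fun ω => G ω i j) μ) (hGpsd : ∀ᵐ ω ∂μ, (G ω).PosSemidef)
    (hv : AEStronglyMeasurable v μ) (hvC : ∀ᵐ ω ∂μ, |v ω| ≤ C)
    (hGpd : (matrixIntegral G μ).PosDef) :
    (matrixIntegral (fun ω => v ω ^ 2 • G ω) μ - matrixIntegral (fun ω => v ω • G ω) μ *
      (matrixIntegral G μ)⁻¹ * matrixIntegral (fun ω => v ω • G ω) μ).PosSemidef := by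
  have hvG : ∀ i j, Integrable (fun ω => v ω * G ω i j) μ := fun i j =>
    (hG i j).bdd_mul hv (by simpa using hvC)
  have hv2G : ∀ i j, Integrable (fun ω => v ω ^ 2 * G ω i j) μ := fun i j =>
    ((hvG i j).bdd_mul hv (by simpa using hvC)).congr (.of_forall fun ω => by ring)
  have hB : (matrixIntegral (fun ω => v ω • G ω) μ).IsHermitian :=
    isHermitian_matrixIntegral (hGpsd.mono fun ω h => h.1.smul (.all (v ω)))
  have hblocks := posSemidef_matrixIntegral (μ := μ)
    (A := fun ω => fromBlocks (v ω ^ 2 • G ω) (v ω • G ω) (v ω • G ω) (G ω))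
    (by rintro (i | i) (j | j) <;> simp [hG, hvG, hv2G])
    (hGpsd.mono fun ω h => h.fromBlocks_sq_smul (v ω))
  have hintegral : matrixIntegral
      (fun ω => fromBlocks (v ω ^ 2 • G ω) (v ω • G ω) (v ω • G ω) (G ω)) μ =
      fromBlocks (matrixIntegral (fun ω => v ω ^ 2 • G ω) μ)
        (matrixIntegral (fun ω => v ω • G ω) μ) (matrixIntegral (fun ω => v ω • G ω) μ)
        (matrixIntegral G μ) := by
    ext (i | i) (j | j) <;> rfl
  have := hGpd.isUnit.invertible
  rw [hintegral] at hblocks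
  have hschur := (PosDef.fromBlocks₂₂ (matrixIntegral (fun ω => v ω ^ 2 • G ω) μ)
    (matrixIntegral (fun ω => v ω • G ω) μ) hGpd).1 (by rwa [hB.eq])
  rwa [hB.eq] at hschur

end MatrixIntegral

theorem Matrix.PosSemidef.inv_mul_mul_inv_sub {n : Type*} [Fintype n] [DecidableEq n]
    {A B D : Matrix n n ℝ} (h : (A - B * D * B).PosSemidef) (hB : B.IsHermitian)
    (hdet : IsUnit B.det) : (B⁻¹ * A * B⁻¹ - D).PosSemidef := by
  have hconj := h.conjTranspose_mul_mul_same B⁻¹ᴴ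
  rw [conjTranspose_conjTranspose, conjTranspose_nonsing_inv, hB.eq] at hconj
  convert hconj using 1
  simp only [Matrix.mul_sub, Matrix.sub_mul, ← Matrix.mul_assoc, nonsing_inv_mul B hdet,
    Matrix.one_mul]
  simp only [Matrix.mul_assoc, mul_nonsing_inv B hdet, Matrix.mul_one]

section QmeleGram

variable {n : Type*}

noncomputable def qmeleGram (a b : n → ℝ) : Matrix n n ℝ :=
  (1/2 : ℝ) • vecMulVec a a + (1/8 : ℝ) • vecMulVec b b

theorem qmeleGram_apply (a b : n → ℝ) (i j : n) :
    qmeleGram a b i j = 1/2 * a i * a j + 1/8 * b i * b j := by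
  simp only [qmeleGram, Matrix.add_apply, Matrix.smul_apply, vecMulVec_apply, smul_eq_mul]
  ring

theorem posSemidef_qmeleGram [Fintype n] (a b : n → ℝ) : (qmeleGram a b).PosSemidef :=
  ((posSemidef_vecMulVec_self_star a).smul (by norm_num)).add
    ((posSemidef_vecMulVec_self_star b).smul (by norm_num))

theorem integrable_qmeleGram_apply [Fintype n] {Ω : Type*} [MeasurableSpace Ω] {μ : Measure Ω}
    {X₁ X₂ : Ω → n → ℝ} (hX₁ : AEStronglyMeasurable X₁ μ) (hX₂ : AEStronglyMeasurable X₂ μ)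
    (hX₁2 : Integrable (fun ω => ‖X₁ ω‖ ^ 2) μ) (hX₂2 : Integrable (fun ω => ‖X₂ ω‖ ^ 2) μ)
    (i j : n) : Integrable (fun ω => qmeleGram (X₁ ω) (X₂ ω) i j) μ := by
  simp only [qmeleGram_apply, mul_assoc]
  exact ((integrable_apply_mul_apply hX₁ hX₁2 i j).const_mul _).add
    ((integrable_apply_mul_apply hX₂ hX₂2 i j).const_mul _)

end QmeleGram

theorem selfweighted_vs_local_qmele_laplace_general
    {Ω : Type*} [MeasurableSpace Ω] (P : Measure Ω)
    (m : ℕ) (X₁ X₂ : Ω → Fin m → ℝ) (hX₁ : Measurable X₁) (hX₂ : Measurable X₂)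
    (hX₁2 : Integrable (fun ω => ‖X₁ ω‖ ^ 2) P)
    (hX₂2 : Integrable (fun ω => ‖X₂ ω‖ ^ 2) P)
    (w : Ω → ℝ) (hw : Measurable w) (K : ℝ)
    (hw0 : ∀ᵐ ω ∂P, 0 ≤ w ω) (hwK : ∀ᵐ ω ∂P, w ω ≤ K)
    (S0 O0 S : Matrix (Fin m) (Fin m) ℝ)
    (hS0 : S0 = Matrix.of fun i j =>
        ∫ ω, w ω * ((1/2) * X₁ ω i * X₁ ω j + (1/8) * X₂ ω i * X₂ ω j) ∂P)
    (hO0 : O0 = Matrix.of fun i j =>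
        ∫ ω, (w ω) ^ 2 * (X₁ ω i * X₁ ω j + (1/4) * X₂ ω i * X₂ ω j) ∂P)
    (hS : S = Matrix.of fun i j =>
        ∫ ω, ((1/2) * X₁ ω i * X₁ ω j + (1/8) * X₂ ω i * X₂ ω j) ∂P)
    (hSpd : S.PosDef) (hS0inv : IsUnit S0.det) :
    (S0⁻¹ * O0 * S0⁻¹ - (2 : ℝ) • S⁻¹).PosSemidef := by
  set G : Ω → Matrix (Fin m) (Fin m) ℝ := fun ω => qmeleGram (X₁ ω) (X₂ ω)
  have hGS : matrixIntegral G P = S := by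
    rw [hS]; ext i j
    exact integral_congr_ae (.of_forall fun ω => qmeleGram_apply _ _ i j)
  have hGS0 : matrixIntegral (fun ω => w ω • G ω) P = S0 := by
    rw [hS0]; ext i j
    exact integral_congr_ae (.of_forall fun ω => by
      simp only [Matrix.smul_apply, smul_eq_mul, G, qmeleGram_apply])
  have hGO0 : matrixIntegral (fun ω => w ω ^ 2 • G ω) P = (1/2 : ℝ) • O0 := by
    rw [hO0]; ext i j
    rw [Matrix.smul_apply, of_apply, smul_eq_mul, ← integral_const_mul]
    exact integral_congr_ae (.of_forall fun ω => by
      simp only [Matrix.smul_apply, smul_eq_mul, G, qmeleGram_apply]; ring)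
  have hS0herm : S0.IsHermitian := hGS0 ▸
    isHermitian_matrixIntegral (.of_forall fun ω => (posSemidef_qmeleGram _ _).1.smul (.all (w ω)))
  have hwK' : ∀ᵐ ω ∂P, |w ω| ≤ K := by
    filter_upwards [hw0, hwK] with ω h0 hK
    rwa [abs_of_nonneg h0]
  have hschur := posSemidef_matrixIntegral_sq_smul_sub
    (integrable_qmeleGram_apply hX₁.aestronglyMeasurable hX₂.aestronglyMeasurable hX₁2 hX₂2)
    (.of_forall fun ω => posSemidef_qmeleGram _ _) hw.aestronglyMeasurable hwK' (hGS ▸ hSpd)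
  rw [hGS, hGS0, hGO0] at hschur
  have h := (hschur.inv_mul_mul_inv_sub hS0herm hS0inv).smul (zero_le_two (α := ℝ))
  rwa [smul_sub, Matrix.mul_smul, Matrix.smul_mul, smul_smul, mul_one_div_cancel two_ne_zero,
    one_smul] at h

/-- Laplace case of Section 3: the local QMELE is asymptotically at least as efficient
as the global self-weighted QMELE, i.e. `Σ₀⁻¹ Ω₀ Σ₀⁻¹ - 2Σ⁻¹` is positive semidefinite. -/
theorem selfweighted_vs_local_qmele_laplace
    {Ω : Type*} [MeasurableSpace Ω] (P : Measure Ω) [IsProbabilityMeasure P]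
    (m : ℕ) (X₁ X₂ : Ω → Fin m → ℝ) (hX₁ : Measurable X₁) (hX₂ : Measurable X₂)
    (hX₁2 : Integrable (fun ω => ‖X₁ ω‖ ^ 2) P)
    (hX₂2 : Integrable (fun ω => ‖X₂ ω‖ ^ 2) P)
    (w : Ω → ℝ) (hw : Measurable w) (K : ℝ)
    (hw0 : ∀ᵐ ω ∂P, 0 ≤ w ω) (hwK : ∀ᵐ ω ∂P, w ω ≤ K)
    (S0 O0 S : Matrix (Fin m) (Fin m) ℝ)
    (hS0 : S0 = Matrix.of fun i j =>
        ∫ ω, w ω * ((1/2) * X₁ ω i * X₁ ω j + (1/8) * X₂ ω i * X₂ ω j) ∂P)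
    (hO0 : O0 = Matrix.of fun i j =>
        ∫ ω, (w ω) ^ 2 * (X₁ ω i * X₁ ω j + (1/4) * X₂ ω i * X₂ ω j) ∂P)
    (hS : S = Matrix.of fun i j =>
        ∫ ω, ((1/2) * X₁ ω i * X₁ ω j + (1/8) * X₂ ω i * X₂ ω j) ∂P)
    (hO0pd : O0.PosDef) (hSpd : S.PosDef) (hS0inv : IsUnit S0.det) :
    (S0⁻¹ * O0 * S0⁻¹ - (2 : ℝ) • S⁻¹).PosSemidef :=
  selfweighted_vs_local_qmele_laplace_general P m X₁ X₂ hX₁ hX₂ hX₁2 hX₂2 w hw K hw0 hwK S0 O0 S hS0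
    hO0 hS hSpd hS0inv
end
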